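/- arXiv:2003.06023 — 2 statements merged into one kernel-verified Lean document; each statement's English description precedes it below -/
import Mathlib

section
/- Total intention-to-treat decomposition: under Assumptions 1 and 2, E[Y | Z_i=1, Z_j=1] − E[Y | Z_i=0, Z_j=0] = E[(Y(1,0)−Y(0,0)) · 1_{(SC_i ∪ C_i ∪ GC_i) ∩ NT_j}] + E[(Y(1,1)−Y(1,0)) · 1_{AT_i ∩ (SC_j ∪ C_j ∪ GC_j)}] + E[(Y(0,1)−Y(0,0)) · 1_{NT_i ∩ (SC_j ∪ C_j ∪ GC_j)}] + E[(Y(1,1)−Y(0,1)) · 1_{(SC_i ∪ C_i ∪ GC_i) ∩ AT_j}] + E[(Y(1,1)−Y(0,0)) · 1_{(SC_i ∪ C_i ∪ GC_i) ∩ (SC_j ∪ C_j ∪ GC_j)}], where 1_A denotes the indicator of the event A. -/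
open MeasureTheory ProbabilityTheory

noncomputable def bInd (b : Bool) : ℝ := if b then 1 else 0

/-! Independence of the instruments makes the mean outcome given `(Z_i, Z_j) = (z, z')` equal to
the unconditional mean of `Y(D_i(z,z'), D_j(z',z))`, so the contrast is the mean of
`Y(D_i(1,1), D_j(1,1)) - Y(D_i(0,0), D_j(0,0))`. Under monotonicity `SC ∪ C ∪ GC` is exactly
`{D(0,0) = 0, D(1,1) = 1}`, so every unit is an always-taker, a never-taker or such a switcher, and
the integrand splits pointwise into the five terms according to the pair of types. -/

theorem measurable_apply_of_countable {α β γ : Type*} [MeasurableSpace α] [MeasurableSpace β]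
    [MeasurableSpace γ] [Countable β] [MeasurableSingletonClass β] {b : α → β} (hb : Measurable b)
    {F : β → α → γ} (hF : ∀ c, Measurable (F c)) : Measurable fun a => F (b a) a :=
  (measurable_from_prod_countable_left (f := fun p : α × β => F p.2 p.1) hF).comp
    (measurable_id.prodMk hb)

theorem integrable_apply_of_finite {Ω β E : Type*} [MeasurableSpace Ω] [Fintype β]
    [MeasurableSpace β] [MeasurableSingletonClass β] [NormedAddCommGroup E] {P : Measure Ω}
    {b : Ω → β} (hb : Measurable b) {F : β → Ω → E} (hF : ∀ c, Integrable (F c) P) :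
    Integrable (fun ω => F (b ω) ω) P := by
  have hsum (ω : Ω) : ∑ c, (b ⁻¹' {c}).indicator (F c) ω = F (b ω) ω :=
    (Finset.sum_eq_single (b ω)
      (fun c _ hc => Set.indicator_of_notMem (s := b ⁻¹' {c}) hc.symm (F c))
      (fun h => absurd (Finset.mem_univ _) h)).trans
      (Set.indicator_of_mem (s := b ⁻¹' {b ω}) rfl (F (b ω)))
  exact (integrable_finsetSum _ fun c _ => (hF c).indicator (hb (measurableSet_singleton c))).congr
    (ae_of_all _ hsum)

theorem ProbabilityTheory.IndepFun.integral_cond_preimage {Ω α β : Type*} [MeasurableSpace Ω]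
    [MeasurableSpace α] [MeasurableSpace β] {P : Measure Ω} [IsFiniteMeasure P]
    {X : Ω → α} {Z : Ω → β} (hXZ : IndepFun X Z P) {f : α → ℝ} (hf : Measurable f)
    (hfX : Integrable (fun ω => f (X ω)) P) (hZ : Measurable Z) {s : Set β}
    (hs : MeasurableSet s) (hPs : P (Z ⁻¹' s) ≠ 0) :
    ∫ ω, f (X ω) ∂P[|Z ⁻¹' s] = ∫ ω, f (X ω) ∂P := by
  have hA : MeasurableSet (Z ⁻¹' s) := hZ hs
  have hsZ : (Z ⁻¹' s).indicator (1 : Ω → ℝ) = s.indicator 1 ∘ Z :=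
    funext fun _ => Set.indicator_comp_right Z (g := (1 : β → ℝ))
  have hprod :
      ∫ ω, f (X ω) * (Z ⁻¹' s).indicator 1 ω ∂P = (∫ ω, f (X ω) ∂P) * P.real (Z ⁻¹' s) := by
    rw [← integral_indicator_one hA, hsZ]
    exact (hXZ.comp hf (measurable_one.indicator hs)).integral_mul_eq_mul_integral
      hfX.aestronglyMeasurable
      ((measurable_one.indicator hs).comp hZ).aestronglyMeasurable
  have hres : ∫ ω in Z ⁻¹' s, f (X ω) ∂P = ∫ ω, f (X ω) * (Z ⁻¹' s).indicator 1 ω ∂P := by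
    rw [← integral_indicator hA]
    congr 1 with ω
    by_cases hω : ω ∈ Z ⁻¹' s <;> simp [hω]
  rw [cond, integral_smul_measure, hres, hprod, ENNReal.toReal_inv, smul_eq_mul, Measure.real]
  field_simp [ENNReal.toReal_ne_zero.mpr ⟨hPs, measure_ne_top P _⟩]

section InstrumentModel

variable {Ω : Type*}

def MonotoneResponse (D : Bool → Bool → Ω → Bool) (ω : Ω) : Prop :=
  D false false ω ≤ D false true ω ∧ D false true ω ≤ D true false ω ∧
    D true false ω ≤ D true true ω

/-- The event `SC ∪ C ∪ GC` of the paper: the treatment switches on somewhere along the instrument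
chain `(0,0) → (0,1) → (1,0) → (1,1)`. -/
def compliers (D : Bool → Bool → Ω → Bool) : Set Ω :=
  {x | D false true x = true ∧ D false false x = false} ∪
    {x | D true false x = true ∧ D false true x = false} ∪
    {x | D true true x = true ∧ D true false x = false}

theorem measurableSet_compliers [MeasurableSpace Ω] {D : Bool → Bool → Ω → Bool}
    (hD : ∀ z z', Measurable (D z z')) : MeasurableSet (compliers D) := by
  have h (z z' b) : MeasurableSet {x | D z z' x = b} := hD z z' (measurableSet_singleton b)
  exact (((h _ _ _).inter (h _ _ _)).union ((h _ _ _).inter (h _ _ _))).union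
    ((h _ _ _).inter (h _ _ _))

theorem mem_compliers_iff {D : Bool → Bool → Ω → Bool} {ω : Ω} (hD : MonotoneResponse D ω) :
    ω ∈ compliers D ↔ D false false ω = false ∧ D true true ω = true := by
  obtain ⟨h₁, h₂, h₃⟩ := hD
  simp only [compliers, Set.mem_union, Set.mem_ofPred_eq]
  revert h₁ h₂ h₃
  cases D false false ω <;> cases D false true ω <;> cases D true false ω <;>
    cases D true true ω <;> decide

theorem MonotoneResponse.le {D : Bool → Bool → Ω → Bool} {ω : Ω} (hD : MonotoneResponse D ω) :
    D false false ω ≤ D true true ω :=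
  hD.1.trans (hD.2.1.trans hD.2.2)

/-- Unit `i`'s outcome when the instruments are set to `(Z_i, Z_j) = (z, z')`. -/
def outcomeUnder (Y : Bool → Bool → Ω → ℝ) (Di Dj : Bool → Bool → Ω → Bool) (z z' : Bool)
    (ω : Ω) : ℝ :=
  Y (Di z z' ω) (Dj z' z ω) ω

theorem integrable_outcomeUnder [MeasurableSpace Ω] {P : Measure Ω} {Y : Bool → Bool → Ω → ℝ}
    {Di Dj : Bool → Bool → Ω → Bool} (hY : ∀ d d', Integrable (Y d d') P)
    (hDi : ∀ z z', Measurable (Di z z')) (hDj : ∀ z z', Measurable (Dj z z')) (z z' : Bool) :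
    Integrable (outcomeUnder Y Di Dj z z') P :=
  integrable_apply_of_finite ((hDi z z').prodMk (hDj z' z)) (F := fun d => Y d.1 d.2)
    fun d => hY d.1 d.2

theorem outcomeUnder_sub_eq {Y : Bool → Bool → Ω → ℝ} {Di Dj : Bool → Bool → Ω → Bool} {ω : Ω}
    (hi : MonotoneResponse Di ω) (hj : MonotoneResponse Dj ω) :
    outcomeUnder Y Di Dj true true ω - outcomeUnder Y Di Dj false false ω =
      (Y true false ω - Y false false ω) *
          (compliers Di ∩ {x | Dj true true x = false}).indicator (fun _ => 1) ω +
        (Y true true ω - Y true false ω) *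
          ({x | Di false false x = true} ∩ compliers Dj).indicator (fun _ => 1) ω +
        (Y false true ω - Y false false ω) *
          ({x | Di true true x = false} ∩ compliers Dj).indicator (fun _ => 1) ω +
        (Y true true ω - Y false true ω) *
          (compliers Di ∩ {x | Dj false false x = true}).indicator (fun _ => 1) ω +
        (Y true true ω - Y false false ω) *
          (compliers Di ∩ compliers Dj).indicator (fun _ => 1) ω := by
  classical
  simp only [outcomeUnder, Set.indicator_apply, Set.mem_inter_iff, mem_compliers_iff hi,
    mem_compliers_iff hj, Set.mem_ofPred_eq]
  have ha := hi.le
  have hb := hj.le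
  revert ha hb
  cases Di false false ω <;> cases Di true true ω <;> cases Dj false false ω <;>
    cases Dj true true ω <;> simp

theorem integral_cond_instruments_eq [MeasurableSpace Ω] {P : Measure Ω} [IsFiniteMeasure P]
    {Y : Bool → Bool → Ω → ℝ} {Di Dj : Bool → Bool → Ω → Bool} {Zi Zj : Ω → Bool}
    (hY : ∀ d d', Integrable (Y d d') P) (hDi : ∀ z z', Measurable (Di z z'))
    (hDj : ∀ z z', Measurable (Dj z z')) (hZi : Measurable Zi) (hZj : Measurable Zj)
    (hIV : IndepFun
      (fun ω => ((fun d d' => Y d d' ω), (fun z z' => Di z z' ω), (fun z z' => Dj z z' ω)))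
      (fun ω => (Zi ω, Zj ω)) P)
    {z z' : Bool} (hpos : P ({x | Zi x = z} ∩ {x | Zj x = z'}) ≠ 0) :
    ∫ ω, Y (Di (Zi ω) (Zj ω) ω) (Dj (Zj ω) (Zi ω) ω) ω ∂P[|{x | Zi x = z} ∩ {x | Zj x = z'}] =
      ∫ ω, outcomeUnder Y Di Dj z z' ω ∂P := by
  have hA : (fun ω => (Zi ω, Zj ω)) ⁻¹' {(z, z')} = {x | Zi x = z} ∩ {x | Zj x = z'} := by
    ext; simp
  have hAm : MeasurableSet ({x | Zi x = z} ∩ {x | Zj x = z'}) :=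
    hA ▸ (hZi.prodMk hZj) (measurableSet_singleton _)
  have hφ : Measurable fun p : (Bool → Bool → ℝ) × (Bool → Bool → Bool) × (Bool → Bool → Bool) =>
      p.1 (p.2.1 z z') (p.2.2 z' z) :=
    measurable_apply_of_countable
      (α := (Bool → Bool → ℝ) × (Bool → Bool → Bool) × (Bool → Bool → Bool))
      (b := fun p => (p.2.1 z z', p.2.2 z' z)) (by fun_prop)
      (F := fun d p => p.1 d.1 d.2) fun _ => by fun_prop
  calc _ = ∫ ω, outcomeUnder Y Di Dj z z' ω ∂P[|{x | Zi x = z} ∩ {x | Zj x = z'}] := by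
        refine integral_congr_ae ((ae_cond_mem hAm).mono fun ω ⟨hi, hj⟩ => ?_)
        rw [Set.mem_ofPred_eq] at hi hj
        dsimp only [outcomeUnder]
        rw [hi, hj]
    _ = _ := by
        rw [← hA] at hpos ⊢
        exact hIV.integral_cond_preimage hφ (integrable_outcomeUnder hY hDi hDj z z')
          (hZi.prodMk hZj) (measurableSet_singleton _) hpos

theorem integrable_mul_indicator_one [MeasurableSpace Ω] {P : Measure Ω} {f : Ω → ℝ}
    (hf : Integrable f P) {S : Set Ω} (hS : MeasurableSet S) :
    Integrable (fun ω => f ω * S.indicator (fun _ => (1 : ℝ)) ω) P :=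
  (hf.indicator hS).congr (ae_of_all _ fun ω => by simp [← Set.indicator_mul_right])

end InstrumentModel

theorem stmt_4_general
    {Ω : Type*} [MeasurableSpace Ω] (P : Measure Ω) [IsProbabilityMeasure P]
    (Y : Bool → Bool → Ω → ℝ) (Di Dj : Bool → Bool → Ω → Bool)
    (Zi Zj : Ω → Bool)
    (hYint : ∀ d d', Integrable (Y d d') P)
    (hDimeas : ∀ z z', Measurable (Di z z'))
    (hDjmeas : ∀ z z', Measurable (Dj z z'))
    (hZi : Measurable Zi) (hZj : Measurable Zj)
    (hpos : ∀ z z', 0 < P ({x | Zi x = z} ∩ {x | Zj x = z'}))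
    (hIV : IndepFun
      (fun ω => ((fun d d' => Y d d' ω),
                 (fun z z' => Di z z' ω),
                 (fun z z' => Dj z z' ω)))
      (fun ω => (Zi ω, Zj ω)) P)
    (hmono : ∀ᵐ ω ∂P,
      (Di false false ω ≤ Di false true ω ∧ Di false true ω ≤ Di true false ω ∧
        Di true false ω ≤ Di true true ω) ∧
      (Dj false false ω ≤ Dj false true ω ∧ Dj false true ω ≤ Dj true false ω ∧
        Dj true false ω ≤ Dj true true ω))
    :
    (∫ ω, (Y (Di (Zi ω) (Zj ω) ω) (Dj (Zj ω) (Zi ω) ω) ω) ∂(P[|({x | Zi x = true} ∩ {x | Zj x = true})])) - (∫ ω, (Y (Di (Zi ω) (Zj ω) ω) (Dj (Zj ω) (Zi ω) ω) ω) ∂(P[|({x | Zi x = false} ∩ {x | Zj x = false})]))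
    = (∫ ω, (Y true false ω - Y false false ω) * Set.indicator (({x | Di false true x = true ∧ Di false false x = false} ∪ {x | Di true false x = true ∧ Di false true x = false} ∪ {x | Di true true x = true ∧ Di true false x = false}) ∩ {x | Dj true true x = false}) (fun _ => (1:ℝ)) ω ∂P)
      + (∫ ω, (Y true true ω - Y true false ω) * Set.indicator ({x | Di false false x = true} ∩ ({x | Dj false true x = true ∧ Dj false false x = false} ∪ {x | Dj true false x = true ∧ Dj false true x = false} ∪ {x | Dj true true x = true ∧ Dj true false x = false})) (fun _ => (1:ℝ)) ω ∂P)
      + (∫ ω, (Y false true ω - Y false false ω) * Set.indicator ({x | Di true true x = false} ∩ ({x | Dj false true x = true ∧ Dj false false x = false} ∪ {x | Dj true false x = true ∧ Dj false true x = false} ∪ {x | Dj true true x = true ∧ Dj true false x = false})) (fun _ => (1:ℝ)) ω ∂P)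
      + (∫ ω, (Y true true ω - Y false true ω) * Set.indicator (({x | Di false true x = true ∧ Di false false x = false} ∪ {x | Di true false x = true ∧ Di false true x = false} ∪ {x | Di true true x = true ∧ Di true false x = false}) ∩ {x | Dj false false x = true}) (fun _ => (1:ℝ)) ω ∂P)
      + (∫ ω, (Y true true ω - Y false false ω) * Set.indicator (({x | Di false true x = true ∧ Di false false x = false} ∪ {x | Di true false x = true ∧ Di false true x = false} ∪ {x | Di true true x = true ∧ Di true false x = false}) ∩ ({x | Dj false true x = true ∧ Dj false false x = false} ∪ {x | Dj true false x = true ∧ Dj false true x = false} ∪ {x | Dj true true x = true ∧ Dj true false x = false})) (fun _ => (1:ℝ)) ω ∂P) := by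
  have hY (z z') := integrable_outcomeUnder hYint hDimeas hDjmeas z z'
  rw [integral_cond_instruments_eq hYint hDimeas hDjmeas hZi hZj hIV (hpos _ _).ne',
    integral_cond_instruments_eq hYint hDimeas hDjmeas hZi hZj hIV (hpos _ _).ne',
    ← integral_sub (hY true true) (hY false false),
    integral_congr_ae (hmono.mono fun ω hω => outcomeUnder_sub_eq hω.1 hω.2)]
  have hDi (z z' b) : MeasurableSet {x | Di z z' x = b} :=
    hDimeas z z' (measurableSet_singleton b)
  have hDj (z z' b) : MeasurableSet {x | Dj z z' x = b} :=
    hDjmeas z z' (measurableSet_singleton b)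
  have hCi := measurableSet_compliers hDimeas
  have hCj := measurableSet_compliers hDjmeas
  rw [integral_add, integral_add, integral_add, integral_add]
  · rfl
  all_goals
    repeat' apply Integrable.add
  all_goals
    refine integrable_mul_indicator_one ((hYint _ _).sub (hYint _ _)) (.inter ?_ ?_)
  all_goals first | exact hCi | exact hCj | exact hDi _ _ _ | exact hDj _ _ _

theorem stmt_4
    {Ω : Type*} [MeasurableSpace Ω] (P : Measure Ω) [IsProbabilityMeasure P]
    (Y : Bool → Bool → Ω → ℝ) (Di Dj : Bool → Bool → Ω → Bool)
    (Zi Zj : Ω → Bool)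
    (hYmeas : ∀ d d', Measurable (Y d d'))
    (hYint : ∀ d d', Integrable (Y d d') P)
    (hDimeas : ∀ z z', Measurable (Di z z'))
    (hDjmeas : ∀ z z', Measurable (Dj z z'))
    (hZi : Measurable Zi) (hZj : Measurable Zj)
    (hpos : ∀ z z', 0 < P ({x | Zi x = z} ∩ {x | Zj x = z'}))
    (hIV : IndepFun
      (fun ω => ((fun d d' => Y d d' ω),
                 (fun z z' => Di z z' ω),
                 (fun z z' => Dj z z' ω)))
      (fun ω => (Zi ω, Zj ω)) P)
    (hmono : ∀ᵐ ω ∂P,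
      (Di false false ω ≤ Di false true ω ∧ Di false true ω ≤ Di true false ω ∧
        Di true false ω ≤ Di true true ω) ∧
      (Dj false false ω ≤ Dj false true ω ∧ Dj false true ω ≤ Dj true false ω ∧
        Dj true false ω ≤ Dj true true ω))
    :
    (∫ ω, (Y (Di (Zi ω) (Zj ω) ω) (Dj (Zj ω) (Zi ω) ω) ω) ∂(P[|({x | Zi x = true} ∩ {x | Zj x = true})])) - (∫ ω, (Y (Di (Zi ω) (Zj ω) ω) (Dj (Zj ω) (Zi ω) ω) ω) ∂(P[|({x | Zi x = false} ∩ {x | Zj x = false})]))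
    = (∫ ω, (Y true false ω - Y false false ω) * Set.indicator (({x | Di false true x = true ∧ Di false false x = false} ∪ {x | Di true false x = true ∧ Di false true x = false} ∪ {x | Di true true x = true ∧ Di true false x = false}) ∩ {x | Dj true true x = false}) (fun _ => (1:ℝ)) ω ∂P)
      + (∫ ω, (Y true true ω - Y true false ω) * Set.indicator ({x | Di false false x = true} ∩ ({x | Dj false true x = true ∧ Dj false false x = false} ∪ {x | Dj true false x = true ∧ Dj false true x = false} ∪ {x | Dj true true x = true ∧ Dj true false x = false})) (fun _ => (1:ℝ)) ω ∂P)
      + (∫ ω, (Y false true ω - Y false false ω) * Set.indicator ({x | Di true true x = false} ∩ ({x | Dj false true x = true ∧ Dj false false x = false} ∪ {x | Dj true false x = true ∧ Dj false true x = false} ∪ {x | Dj true true x = true ∧ Dj true false x = false})) (fun _ => (1:ℝ)) ω ∂P)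
      + (∫ ω, (Y true true ω - Y false true ω) * Set.indicator (({x | Di false true x = true ∧ Di false false x = false} ∪ {x | Di true false x = true ∧ Di false true x = false} ∪ {x | Di true true x = true ∧ Di true false x = false}) ∩ {x | Dj false false x = true}) (fun _ => (1:ℝ)) ω ∂P)
      + (∫ ω, (Y true true ω - Y false false ω) * Set.indicator (({x | Di false true x = true ∧ Di false false x = false} ∪ {x | Di true false x = true ∧ Di false true x = false} ∪ {x | Di true true x = true ∧ Di true false x = false}) ∩ ({x | Dj false true x = true ∧ Dj false false x = false} ∪ {x | Dj true false x = true ∧ Dj false true x = false} ∪ {x | Dj true true x = true ∧ Dj true false x = false})) (fun _ => (1:ℝ)) ω ∂P) :=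
  stmt_4_general P Y Di Dj Zi Zj hYint hDimeas hDjmeas hZi hZj hpos hIV hmono
end

section
/- Local average spillover effect under one-sided noncompliance: under Assumptions 1, 2 and 4, if P[C_j] > 0 then E[Y(0,1) − Y(0,0) | C_j] = (E[Y | Z_i=0, Z_j=1] − E[Y | Z_i=0, Z_j=0]) / E[D_j | Z_i=0, Z_j=1]. -/
open MeasureTheory ProbabilityTheory

/-!
Under one-sided noncompliance, when `Z_i = 0` unit `i` is untreated and unit `j` is treated exactly
when `Z_j = 1` and `D_j(1,0) = 1`. Hence on `{Z_i = 0, Z_j = 1}` the observed outcome is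
`Y(0, D_j(1,0))`, on `{Z_i = 0, Z_j = 0}` it is `Y(0,0)`, and on `{Z_i = 0, Z_j = 1}` the observed
`D_j` is `D_j(1,0)`. Independence of the instruments turns the three conditional expectations into
unconditional ones, so the numerator is `E[(Y(0,1) - Y(0,0)); D_j(1,0) = 1]`, the denominator is
`P[D_j(1,0) = 1]`, and `{D_j(1,0) = 1}` is the complier event up to a null set.
-/

namespace ProbabilityTheory

variable {Ω : Type*} [MeasurableSpace Ω] {μ : Measure Ω} {s t : Set Ω}

lemma cond_congr_ae (h : s =ᵐ[μ] t) : μ[|s] = μ[|t] := by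
  rw [cond, cond, measure_congr h, Measure.restrict_congr_set h]

lemma integral_cond_eq_inv_mul_setIntegral (f : Ω → ℝ) :
    ∫ ω, f ω ∂μ[|s] = (μ.real s)⁻¹ * ∫ ω in s, f ω ∂μ := by
  rw [cond, integral_smul_measure, ENNReal.toReal_inv, smul_eq_mul, measureReal_def]

lemma integral_cond_congr {f g : Ω → ℝ} (hs : MeasurableSet s)
    (h : ∀ᵐ ω ∂μ, ω ∈ s → f ω = g ω) : ∫ ω, f ω ∂μ[|s] = ∫ ω, g ω ∂μ[|s] :=
  integral_congr_ae <| by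
    filter_upwards [ae_cond_mem hs, cond_absolutelyContinuous h] with ω hω hfg using hfg hω

lemma IndepFun.integral_cond_eq_integral [IsFiniteMeasure μ] {γ : Type*}
    [mγ : MeasurableSpace γ] {X : Ω → ℝ} {Z : Ω → γ} (hXZ : IndepFun X Z μ)
    (hX : AEMeasurable X μ) (hZ : Measurable Z) (hs : MeasurableSet[mγ.comap Z] s)
    (hμs : μ s ≠ 0) :
    ∫ ω, X ω ∂μ[|s] = ∫ ω, X ω ∂μ := by
  have hindep : Indep (mγ.comap Z) (MeasurableSpace.comap X inferInstance) μ :=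
    (IndepFun_iff_Indep Z X μ).1 hXZ.symm
  have hset : ∫ ω in s, X ω ∂μ = μ.real s * ∫ ω, X ω ∂μ :=
    hindep.setIntegral_eq_mul (f := id) hZ.comap_le hX hs aestronglyMeasurable_id
  rw [integral_cond_eq_inv_mul_setIntegral, hset, ← mul_assoc,
    inv_mul_cancel₀ ((measureReal_ne_zero_iff (measure_ne_top μ s)).2 hμs), one_mul]

end ProbabilityTheory

lemma Measurable.apply_of_countable {α β γ : Type*} [MeasurableSpace α] [MeasurableSpace β]
    [Countable β] [MeasurableSingletonClass β] [MeasurableSpace γ] {f : α → β → γ} {b : α → β}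
    (hf : Measurable f) (hb : Measurable b) : Measurable fun a => f a (b a) :=
  (measurable_from_prod_countable_left (f := fun q : (β → γ) × β => q.1 q.2)
    fun y => measurable_pi_apply y).comp (hf.prodMk hb)

section BoolSelection

lemma apply_bool_eq_piecewise {Ω β : Type*} (F : Bool → Ω → β) (D : Ω → Bool) :
    (fun ω => F (D ω) ω) = {ω | D ω = true}.piecewise (F true) (F false) := by
  funext ω
  by_cases h : D ω = true <;> simp [Set.piecewise, h]

variable {Ω : Type*} [MeasurableSpace Ω] {μ : Measure Ω} {D : Ω → Bool}

lemma integrable_apply_bool {F : Bool → Ω → ℝ} (hF : ∀ b, Integrable (F b) μ)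
    (hD : Measurable D) : Integrable (fun ω => F (D ω) ω) μ := by
  rw [apply_bool_eq_piecewise]
  exact Integrable.piecewise (hD (measurableSet_singleton true)) (hF true).integrableOn
    (hF false).integrableOn

lemma integral_apply_bool_sub_integral_false {F : Bool → Ω → ℝ}
    (hF : ∀ b, Integrable (F b) μ) (hD : Measurable D) :
    ∫ ω, F (D ω) ω ∂μ - ∫ ω, F false ω ∂μ
      = ∫ ω in {ω | D ω = true}, (F true ω - F false ω) ∂μ := by
  have hs : MeasurableSet {ω | D ω = true} := hD (measurableSet_singleton true)
  rw [apply_bool_eq_piecewise, integral_piecewise hs (hF true).integrableOn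
    (hF false).integrableOn, ← integral_add_compl hs (hF false),
    integral_sub (hF true).integrableOn (hF false).integrableOn]
  ring

lemma integral_bInd (hD : Measurable D) :
    ∫ ω, bInd (D ω) ∂μ = μ.real {ω | D ω = true} := by
  have hs : MeasurableSet {ω | D ω = true} := hD (measurableSet_singleton true)
  have hind : (fun ω => bInd (D ω)) = {ω | D ω = true}.indicator 1 := by
    funext ω
    by_cases h : D ω = true <;> simp [bInd, h]
  rw [hind, integral_indicator_one hs]

end BoolSelection

section Spillover

variable {Ω : Type*} [MeasurableSpace Ω] {P : Measure Ω} [IsFiniteMeasure P]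
  {Y : Bool → Bool → Ω → ℝ} {Di Dj : Bool → Bool → Ω → Bool} {Zi Zj : Ω → Bool}

variable (Y Di Dj) in
abbrev potentialOutcomes (ω : Ω) :
    (Bool → Bool → ℝ) × (Bool → Bool → Bool) × (Bool → Bool → Bool) :=
  (fun d d' => Y d d' ω, fun z z' => Di z z' ω, fun z z' => Dj z z' ω)

variable (hZi : Measurable Zi) (hZj : Measurable Zj)
  (hIV : IndepFun (potentialOutcomes Y Di Dj) (fun ω => (Zi ω, Zj ω)) P)
include hZi hZj hIV

lemma integral_cond_instruments_eq_integral {a b : Bool}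
    (hpos : P ({x | Zi x = a} ∩ {x | Zj x = b}) ≠ 0)
    {g : (Bool → Bool → ℝ) × (Bool → Bool → Bool) × (Bool → Bool → Bool) → ℝ}
    (hg : Measurable g) {f : Ω → ℝ}
    (hgm : AEMeasurable (fun ω => g (potentialOutcomes Y Di Dj ω)) P)
    (hf : ∀ᵐ ω ∂P, Zi ω = a → Zj ω = b → f ω = g (potentialOutcomes Y Di Dj ω)) :
    ∫ ω, f ω ∂P[|{x | Zi x = a} ∩ {x | Zj x = b}]
      = ∫ ω, g (potentialOutcomes Y Di Dj ω) ∂P := by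
  have hZ : Measurable fun ω => (Zi ω, Zj ω) := hZi.prodMk hZj
  have hcell : MeasurableSet[MeasurableSpace.comap (fun ω => (Zi ω, Zj ω)) inferInstance]
      ({x | Zi x = a} ∩ {x | Zj x = b}) :=
    ⟨{(a, b)}, measurableSet_singleton _, by ext; simp⟩
  rw [integral_cond_congr (hZ.comap_le _ hcell) (hf.mono fun ω h hω => h hω.1 hω.2)]
  exact (hIV.comp hg measurable_id).integral_cond_eq_integral hgm hZ hcell hpos

lemma integral_observed_outcome_cond_false_true
    (hosn : ∀ᵐ ω ∂P, Di false true ω = false)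
    (hY : ∀ d, Integrable (Y false d) P) (hDj : Measurable (Dj true false))
    (hpos : P ({x | Zi x = false} ∩ {x | Zj x = true}) ≠ 0) :
    ∫ ω, Y (Di (Zi ω) (Zj ω) ω) (Dj (Zj ω) (Zi ω) ω) ω
      ∂P[|{x | Zi x = false} ∩ {x | Zj x = true}] = ∫ ω, Y false (Dj true false ω) ω ∂P :=
  integral_cond_instruments_eq_integral hZi hZj hIV hpos
    (Measurable.apply_of_countable (f := fun p => p.1 false) (b := fun p => p.2.2 true false)
      (by fun_prop) (by fun_prop)) (integrable_apply_bool hY hDj).aemeasurable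
    (by filter_upwards [hosn] with ω hω hi hj; rw [hi, hj, hω])

lemma integral_observed_outcome_cond_false_false
    (hosn : ∀ᵐ ω ∂P, Di false false ω = false ∧ Dj false false ω = false)
    (hY : Integrable (Y false false) P)
    (hpos : P ({x | Zi x = false} ∩ {x | Zj x = false}) ≠ 0) :
    ∫ ω, Y (Di (Zi ω) (Zj ω) ω) (Dj (Zj ω) (Zi ω) ω) ω
      ∂P[|{x | Zi x = false} ∩ {x | Zj x = false}] = ∫ ω, Y false false ω ∂P :=
  integral_cond_instruments_eq_integral hZi hZj hIV hpos (g := fun p => p.1 false false) (by fun_prop)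
    hY.aemeasurable (by filter_upwards [hosn] with ω hω hi hj; rw [hi, hj, hω.1, hω.2])

lemma integral_observed_treatment_cond_false_true (hDj : Measurable (Dj true false))
    (hpos : P ({x | Zi x = false} ∩ {x | Zj x = true}) ≠ 0) :
    ∫ ω, bInd (Dj (Zj ω) (Zi ω) ω) ∂P[|{x | Zi x = false} ∩ {x | Zj x = true}]
      = P.real {x | Dj true false x = true} := by
  rw [← integral_bInd hDj]
  exact integral_cond_instruments_eq_integral hZi hZj hIV hpos (g := fun p => bInd (p.2.2 true false))
    ((measurable_of_countable bInd).comp (by fun_prop))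
    ((measurable_of_countable bInd).comp hDj).aemeasurable
    (ae_of_all _ fun ω hi hj => by rw [hi, hj])

end Spillover

theorem stmt_10_general
    {Ω : Type*} [MeasurableSpace Ω] (P : Measure Ω) [IsProbabilityMeasure P]
    (Y : Bool → Bool → Ω → ℝ) (Di Dj : Bool → Bool → Ω → Bool)
    (Zi Zj : Ω → Bool)
    (hYint : ∀ d d', Integrable (Y d d') P)
    (hDjmeas : ∀ z z', Measurable (Dj z z'))
    (hZi : Measurable Zi) (hZj : Measurable Zj)
    (hpos : ∀ z z', 0 < P ({x | Zi x = z} ∩ {x | Zj x = z'}))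
    (hIV : IndepFun
      (fun ω => ((fun d d' => Y d d' ω),
                 (fun z z' => Di z z' ω),
                 (fun z z' => Dj z z' ω)))
      (fun ω => (Zi ω, Zj ω)) P)
    (hosn : ∀ᵐ ω ∂P,
      Di false false ω = false ∧ Di false true ω = false ∧
      Dj false false ω = false ∧ Dj false true ω = false)
    :
    (∫ ω, (Y false true ω - Y false false ω) ∂(P[|{x | Dj true false x = true ∧ Dj false true x = false}]))
    = ((∫ ω, (Y (Di (Zi ω) (Zj ω) ω) (Dj (Zj ω) (Zi ω) ω) ω) ∂(P[|({x | Zi x = false} ∩ {x | Zj x = true})])) - (∫ ω, (Y (Di (Zi ω) (Zj ω) ω) (Dj (Zj ω) (Zi ω) ω) ω) ∂(P[|({x | Zi x = false} ∩ {x | Zj x = false})])))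
      / (∫ ω, bInd (Dj (Zj ω) (Zi ω) ω) ∂(P[|({x | Zi x = false} ∩ {x | Zj x = true})])) := by
  have hcomplier : {x | Dj true false x = true ∧ Dj false true x = false}
      =ᵐ[P] {x | Dj true false x = true} :=
    Filter.eventuallyEq_set.2 (hosn.mono fun ω hω => and_iff_left hω.2.2.2)
  rw [cond_congr_ae hcomplier, integral_cond_eq_inv_mul_setIntegral,
    integral_observed_outcome_cond_false_true hZi hZj hIV (hosn.mono fun _ h => h.2.1)
      (hYint false) (hDjmeas true false) (hpos false true).ne',
    integral_observed_outcome_cond_false_false hZi hZj hIV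
      (hosn.mono fun _ h => ⟨h.1, h.2.2.1⟩) (hYint false false) (hpos false false).ne',
    integral_observed_treatment_cond_false_true hZi hZj hIV (hDjmeas true false)
      (hpos false true).ne',
    integral_apply_bool_sub_integral_false (hYint false) (hDjmeas true false), inv_mul_eq_div]

theorem stmt_10
    {Ω : Type*} [MeasurableSpace Ω] (P : Measure Ω) [IsProbabilityMeasure P]
    (Y : Bool → Bool → Ω → ℝ) (Di Dj : Bool → Bool → Ω → Bool)
    (Zi Zj : Ω → Bool)
    (hYmeas : ∀ d d', Measurable (Y d d'))
    (hYint : ∀ d d', Integrable (Y d d') P)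
    (hDimeas : ∀ z z', Measurable (Di z z'))
    (hDjmeas : ∀ z z', Measurable (Dj z z'))
    (hZi : Measurable Zi) (hZj : Measurable Zj)
    (hpos : ∀ z z', 0 < P ({x | Zi x = z} ∩ {x | Zj x = z'}))
    (hIV : IndepFun
      (fun ω => ((fun d d' => Y d d' ω),
                 (fun z z' => Di z z' ω),
                 (fun z z' => Dj z z' ω)))
      (fun ω => (Zi ω, Zj ω)) P)
    (hmono : ∀ᵐ ω ∂P,
      (Di false false ω ≤ Di false true ω ∧ Di false true ω ≤ Di true false ω ∧
        Di true false ω ≤ Di true true ω) ∧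
      (Dj false false ω ≤ Dj false true ω ∧ Dj false true ω ≤ Dj true false ω ∧
        Dj true false ω ≤ Dj true true ω))
    (hosn : ∀ᵐ ω ∂P,
      Di false false ω = false ∧ Di false true ω = false ∧
      Dj false false ω = false ∧ Dj false true ω = false)
    (hC : 0 < P ({x | Dj true false x = true ∧ Dj false true x = false}))
    :
    (∫ ω, (Y false true ω - Y false false ω) ∂(P[|{x | Dj true false x = true ∧ Dj false true x = false}]))
    = ((∫ ω, (Y (Di (Zi ω) (Zj ω) ω) (Dj (Zj ω) (Zi ω) ω) ω) ∂(P[|({x | Zi x = false} ∩ {x | Zj x = true})])) - (∫ ω, (Y (Di (Zi ω) (Zj ω) ω) (Dj (Zj ω) (Zi ω) ω) ω) ∂(P[|({x | Zi x = false} ∩ {x | Zj x = false})])))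
      / (∫ ω, bInd (Dj (Zj ω) (Zi ω) ω) ∂(P[|({x | Zi x = false} ∩ {x | Zj x = true})])) :=
  stmt_10_general P Y Di Dj Zi Zj hYint hDjmeas hZi hZj hpos hIV hosn
end
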